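/- arXiv:1511.02084 — 3 statements merged into one kernel-verified Lean document; each statement's English description precedes it below -/
import Mathlib

section
/- Let X be a real normed space and let x₀ ∈ X be a nonzero vector. Then x₀ has exactly one norming functional if and only if the norm is Gâteaux-differentiable at x₀, i.e. there exists a continuous linear functional f : X → ℝ such that for every v ∈ X, (‖x₀ + t·v‖ − ‖x₀‖)/t tends to f(v) as t tends to 0 (through nonzero real t). -/
/-!
Let `p v` be the right derivative of the norm at `x₀` in direction `v`. Being a limit of
difference quotients of a convex function, `p` is sublinear with `p ≤ ‖·‖`, and a continuous
functional `f` norms `x₀` exactly when `f ≤ p`. By Hahn–Banach every value `p v` is attained by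
such an `f`, so a unique norming functional must coincide with `p`, which makes `p` linear; then
the left derivative `-p (-v)` equals `p v`, which is Gâteaux differentiability. Conversely a
Gâteaux derivative `f` equals `p`, so it norms `x₀`, and any other norming `g ≤ p = f` is `f`.
-/

open Filter Set Topology

section Sublinear

variable {E : Type*} [AddCommGroup E] [Module ℝ E] {N : E → ℝ}

lemma map_zero_of_pos_homogeneous (N_hom : ∀ c : ℝ, 0 < c → ∀ x, N (c • x) = c * N x) :
    N 0 = 0 := by
  have h := N_hom 2 two_pos 0
  rw [smul_zero] at h
  linarith

lemma mul_le_of_sublinear (N_hom : ∀ c : ℝ, 0 < c → ∀ x, N (c • x) = c * N x)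
    (N_add : ∀ x y, N (x + y) ≤ N x + N y) (c : ℝ) (v : E) : c * N v ≤ N (c • v) := by
  rcases lt_trichotomy c 0 with hc | rfl | hc
  · have hv : 0 ≤ N v + N (-v) := by
      simpa [map_zero_of_pos_homogeneous N_hom] using N_add v (-v)
    calc c * N v ≤ -c * N (-v) := by nlinarith
      _ = N (c • v) := by rw [← N_hom _ (neg_pos.2 hc), neg_smul, smul_neg, neg_neg]
  · simp [map_zero_of_pos_homogeneous N_hom]
  · exact (N_hom c hc v).ge

theorem exists_linearMap_le_sublinear_eq (N_hom : ∀ c : ℝ, 0 < c → ∀ x, N (c • x) = c * N x)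
    (N_add : ∀ x y, N (x + y) ≤ N x + N y) (v : E) :
    ∃ g : E →ₗ[ℝ] ℝ, (∀ x, g x ≤ N x) ∧ g v = N v := by
  let f : E →ₗ.[ℝ] ℝ := LinearPMap.mkSpanSingleton' v (N v) fun (c : ℝ) hc => by
    rcases smul_eq_zero.1 hc with rfl | rfl
    · exact zero_smul _ _
    · simp [map_zero_of_pos_homogeneous N_hom]
  have hdom : f.domain = ℝ ∙ v := LinearPMap.domain_mkSpanSingleton _ _ _
  obtain ⟨g, hgf, hgN⟩ := exists_extension_of_le_sublinear f N N_hom N_add <| by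
    rintro ⟨x, hx⟩
    obtain ⟨c, rfl⟩ := Submodule.mem_span_singleton.1 (hdom ▸ hx)
    rw [LinearPMap.mkSpanSingleton'_apply]
    exact mul_le_of_sublinear N_hom N_add c v
  have hv : v ∈ f.domain := hdom ▸ Submodule.mem_span_singleton_self v
  exact ⟨g, hgN, (hgf ⟨v, hv⟩).trans (LinearPMap.mkSpanSingleton'_apply_self _ _ _ _)⟩

end Sublinear

/-- For convex `φ` this is the limit of `(φ (x + t • v) - φ x) / t` as `t → 0+`; where that limit
does not exist, `derivWithin` returns the junk value `0`. -/
noncomputable def rightLineDeriv {E : Type*} [AddCommGroup E] [Module ℝ E] (φ : E → ℝ)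
    (x v : E) : ℝ :=
  derivWithin (fun t : ℝ => φ (x + t • v)) (Ioi 0) 0

namespace ConvexOn

variable {E : Type*} [AddCommGroup E] [Module ℝ E] {φ : E → ℝ}

lemma comp_line (hφ : ConvexOn ℝ univ φ) (x v : E) :
    ConvexOn ℝ univ (fun t : ℝ => φ (x + t • v)) := by
  have h : (fun t : ℝ => φ (x + t • v)) = φ ∘ AffineMap.lineMap x (x + v) := by
    ext t
    simp [AffineMap.lineMap_apply_module', add_comm]
  simpa [h] using hφ.comp_affineMap (AffineMap.lineMap x (x + v))

lemma hasDerivWithinAt_rightLineDeriv (hφ : ConvexOn ℝ univ φ) (x v : E) :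
    HasDerivWithinAt (fun t : ℝ => φ (x + t • v)) (rightLineDeriv φ x v) (Ioi 0) 0 :=
  (hφ.comp_line x v).hasDerivWithinAt_rightDeriv_of_mem_interior (by simp)

lemma tendsto_slope_rightLineDeriv (hφ : ConvexOn ℝ univ φ) (x v : E) :
    Tendsto (fun t : ℝ => (φ (x + t • v) - φ x) / t) (𝓝[>] 0) (𝓝 (rightLineDeriv φ x v)) :=
  ((hasDerivWithinAt_iff_tendsto_slope' (lt_irrefl (0 : ℝ))).1
    (hφ.hasDerivWithinAt_rightLineDeriv x v)).congr fun t => by simp [slope_def_field]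

lemma rightLineDeriv_le_slope (hφ : ConvexOn ℝ univ φ) (x v : E) {t : ℝ} (ht : 0 < t) :
    rightLineDeriv φ x v ≤ (φ (x + t • v) - φ x) / t := by
  have h := (hφ.comp_line x v).rightDeriv_le_slope_of_mem_interior (by simp) (mem_univ t) ht
  rw [rightLineDeriv]
  simpa [slope_def_field] using h

lemma rightLineDeriv_smul (hφ : ConvexOn ℝ univ φ) (x v : E) {c : ℝ} (hc : 0 < c) :
    rightLineDeriv φ x (c • v) = c * rightLineDeriv φ x v := by
  have hmul : HasDerivWithinAt (fun t : ℝ => c * t) c (Ioi 0) 0 := by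
    simpa using ((hasDerivAt_id (0 : ℝ)).const_mul c).hasDerivWithinAt
  have h := (hφ.hasDerivWithinAt_rightLineDeriv x v).comp_of_eq 0 hmul
    (fun t (ht : 0 < t) => mul_pos hc ht) (mul_zero c).symm
  rw [mul_comm] at h
  exact (h.congr (by simp [smul_smul, mul_comm]) (by simp)).derivWithin (uniqueDiffWithinAt_Ioi 0)

lemma rightLineDeriv_add_le (hφ : ConvexOn ℝ univ φ) (x u v : E) :
    rightLineDeriv φ x (u + v) ≤ rightLineDeriv φ x u + rightLineDeriv φ x v := by
  have hlim := ((hφ.tendsto_slope_rightLineDeriv x ((2 : ℝ) • u)).add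
    (hφ.tendsto_slope_rightLineDeriv x ((2 : ℝ) • v))).const_mul (1 / 2)
  rw [hφ.rightLineDeriv_smul x u two_pos, hφ.rightLineDeriv_smul x v two_pos] at hlim
  have hle := ge_of_tendsto hlim <| eventually_nhdsWithin_of_forall fun t (ht : 0 < t) => by
    have hmid : φ (x + t • (u + v)) ≤
        (1 / 2 : ℝ) • φ (x + t • ((2 : ℝ) • u)) + (1 / 2 : ℝ) • φ (x + t • ((2 : ℝ) • v)) := by
      have hx : x + t • (u + v) =
          (1 / 2 : ℝ) • (x + t • ((2 : ℝ) • u)) + (1 / 2 : ℝ) • (x + t • ((2 : ℝ) • v)) := by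
        module
      rw [hx]
      exact hφ.2 (mem_univ _) (mem_univ _) (by norm_num) (by norm_num) (by norm_num)
    calc rightLineDeriv φ x (u + v) ≤ (φ (x + t • (u + v)) - φ x) / t :=
          hφ.rightLineDeriv_le_slope x (u + v) ht
      _ ≤ _ := div_le_div_of_nonneg_right (sub_le_sub_right hmid _) ht.le
      _ = _ := by simp only [smul_eq_mul]; ring
  linarith

lemma tendsto_slope_nhdsLT (hφ : ConvexOn ℝ univ φ) (x v : E) :
    Tendsto (fun t : ℝ => (φ (x + t • v) - φ x) / t) (𝓝[<] 0)
      (𝓝 (-rightLineDeriv φ x (-v))) := by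
  have hneg : Tendsto (fun t : ℝ => -t) (𝓝[<] 0) (𝓝[>] 0) := by
    simpa using tendsto_neg_nhdsLT (a := (0 : ℝ))
  refine ((hφ.tendsto_slope_rightLineDeriv x (-v)).comp hneg).neg.congr fun t => ?_
  simp [div_neg]

lemma tendsto_slope_nhdsNE_iff (hφ : ConvexOn ℝ univ φ) (x v : E) (a : ℝ) :
    Tendsto (fun t : ℝ => (φ (x + t • v) - φ x) / t) (𝓝[≠] 0) (𝓝 a) ↔
      rightLineDeriv φ x v = a ∧ -rightLineDeriv φ x (-v) = a := by
  rw [← nhdsLT_sup_nhdsGT, tendsto_sup, and_comm]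
  exact and_congr
    ⟨tendsto_nhds_unique (hφ.tendsto_slope_rightLineDeriv x v),
      fun h => h ▸ hφ.tendsto_slope_rightLineDeriv x v⟩
    ⟨tendsto_nhds_unique (hφ.tendsto_slope_nhdsLT x v), fun h => h ▸ hφ.tendsto_slope_nhdsLT x v⟩

end ConvexOn

lemma ContinuousLinearMap.eq_of_forall_apply_le {M : Type*} [AddCommGroup M] [Module ℝ M]
    [TopologicalSpace M] {f g : M →L[ℝ] ℝ} (h : ∀ v, f v ≤ g v) : f = g := by
  ext v
  have h' := h (-v)
  rw [map_neg, map_neg, neg_le_neg_iff] at h'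
  exact le_antisymm (h v) h'

section NormingFunctional

variable {X : Type*} [NormedAddCommGroup X] [NormedSpace ℝ X]

def IsNormingFunctional (x₀ : X) (f : X →L[ℝ] ℝ) : Prop :=
  ‖f‖ = 1 ∧ f x₀ = ‖x₀‖

lemma norm_apply_le_of_forall_le_norm {f : X →ₗ[ℝ] ℝ} (hf : ∀ v, f v ≤ ‖v‖) (v : X) :
    ‖f v‖ ≤ ‖v‖ := by
  have h := hf (-v)
  rw [map_neg, norm_neg] at h
  rw [Real.norm_eq_abs, abs_le]
  exact ⟨by linarith, hf v⟩

lemma rightLineDeriv_norm_le (x₀ v : X) : rightLineDeriv norm x₀ v ≤ ‖v‖ := by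
  have h := (convexOn_norm convex_univ).rightLineDeriv_le_slope x₀ v one_pos
  rw [one_smul, div_one] at h
  linarith [norm_add_le x₀ v]

lemma rightLineDeriv_norm_neg_self_le (x₀ : X) : rightLineDeriv norm x₀ (-x₀) ≤ -‖x₀‖ := by
  simpa using (convexOn_norm convex_univ).rightLineDeriv_le_slope x₀ (-x₀) one_pos

lemma isNormingFunctional_iff_le_rightLineDeriv {x₀ : X} (hx₀ : x₀ ≠ 0) {f : X →L[ℝ] ℝ} :
    IsNormingFunctional x₀ f ↔ ∀ v, f v ≤ rightLineDeriv norm x₀ v := by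
  constructor
  · rintro ⟨hf_norm, hfx₀⟩ v
    refine ge_of_tendsto ((convexOn_norm convex_univ).tendsto_slope_rightLineDeriv x₀ v)
      (eventually_nhdsWithin_of_forall fun t (ht : 0 < t) => ?_)
    have h := (Real.le_norm_self _).trans (f.le_opNorm (x₀ + t • v))
    rw [hf_norm, one_mul, map_add, map_smul, hfx₀, smul_eq_mul] at h
    rw [le_div_iff₀ ht]
    linarith
  · intro hfp
    have hle : ∀ v, f v ≤ ‖v‖ := fun v => (hfp v).trans (rightLineDeriv_norm_le x₀ v)
    have hfx₀ : f x₀ = ‖x₀‖ := by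
      have h := (hfp (-x₀)).trans (rightLineDeriv_norm_neg_self_le x₀)
      rw [map_neg] at h
      exact le_antisymm (hle x₀) (by linarith)
    refine ⟨le_antisymm ?_ ?_, hfx₀⟩
    · exact f.opNorm_le_bound zero_le_one fun v => by
        simpa using norm_apply_le_of_forall_le_norm (f := f.toLinearMap) hle v
    · have h := f.le_opNorm x₀
      rw [hfx₀, Real.norm_of_nonneg (norm_nonneg _)] at h
      exact le_of_mul_le_mul_right (by simpa using h) (norm_pos_iff.2 hx₀)

lemma exists_isNormingFunctional_apply_eq {x₀ : X} (hx₀ : x₀ ≠ 0) (v : X) :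
    ∃ f : X →L[ℝ] ℝ, IsNormingFunctional x₀ f ∧ f v = rightLineDeriv norm x₀ v := by
  have hφ : ConvexOn ℝ univ (norm : X → ℝ) := convexOn_norm convex_univ
  obtain ⟨g, hgp, hgv⟩ := exists_linearMap_le_sublinear_eq
    (fun c hc w => hφ.rightLineDeriv_smul x₀ w hc) (hφ.rightLineDeriv_add_le x₀) v
  have hg_le : ∀ w, g w ≤ ‖w‖ := fun w => (hgp w).trans (rightLineDeriv_norm_le x₀ w)
  let f := g.mkContinuous 1 fun w => by simpa using norm_apply_le_of_forall_le_norm hg_le w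
  exact ⟨f, (isNormingFunctional_iff_le_rightLineDeriv hx₀).2 hgp, hgv⟩

end NormingFunctional

theorem unique_norming_functional_iff_gateaux {X : Type*} [NormedAddCommGroup X]
    [NormedSpace ℝ X] (x₀ : X) (hx₀ : x₀ ≠ 0) :
    (∃! f : X →L[ℝ] ℝ, ‖f‖ = 1 ∧ f x₀ = ‖x₀‖) ↔
      ∃ f : X →L[ℝ] ℝ, ∀ v : X,
        Tendsto (fun t : ℝ => (‖x₀ + t • v‖ - ‖x₀‖) / t) (nhdsWithin 0 {0}ᶜ)
          (nhds (f v)) := by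
  have hφ : ConvexOn ℝ univ (norm : X → ℝ) := convexOn_norm convex_univ
  change (∃! f, IsNormingFunctional x₀ f) ↔ _
  simp only [hφ.tendsto_slope_nhdsNE_iff x₀]
  constructor
  · rintro ⟨f, -, huniq⟩
    have hfp : ∀ v, f v = rightLineDeriv norm x₀ v := fun v => by
      obtain ⟨g, hg, hgv⟩ := exists_isNormingFunctional_apply_eq hx₀ v
      rw [← hgv, huniq g hg]
    exact ⟨f, fun v => ⟨(hfp v).symm, by rw [← hfp, map_neg, neg_neg]⟩⟩
  · rintro ⟨f, hf⟩
    have hfp : ∀ v, f v ≤ rightLineDeriv norm x₀ v := fun v => (hf v).1.ge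
    refine ⟨f, (isNormingFunctional_iff_le_rightLineDeriv hx₀).2 hfp, fun g hg => ?_⟩
    exact ContinuousLinearMap.eq_of_forall_apply_le fun v =>
      ((isNormingFunctional_iff_le_rightLineDeriv hx₀).1 hg v).trans (hf v).1.le
end

section
/- Let X be a finite-dimensional real normed space and let D be the set of all x ∈ X with ‖x‖ = 1 that have exactly one norming functional. Let φ : X → X* be any function into the (strong) dual of X such that for every x ∈ D, φ(x) is a norming functional for x (i.e. ‖φ(x)‖ = 1 and φ(x)(x) = 1). Then φ is continuous on D (ContinuousOn φ D). -/
open Filter Topology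

theorem continuousOn_norming_functional_map {X : Type*} [NormedAddCommGroup X]
    [NormedSpace ℝ X] [FiniteDimensional ℝ X]
    (D : Set X)
    (hD : D = {x : X | ‖x‖ = 1 ∧ ∃! f : X →L[ℝ] ℝ, ‖f‖ = 1 ∧ f x = ‖x‖})
    (φ : X → (X →L[ℝ] ℝ))
    (hφ : ∀ x ∈ D, ‖φ x‖ = 1 ∧ φ x x = 1) :
    ContinuousOn φ D := by
  intro x hx
  have hxD := hx
  rw [hD] at hxD
  obtain ⟨hxnorm, f0, hf0, huniq⟩ := hxD
  have hφx := hφ x hx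
  have hφxeq : φ x = f0 := huniq _ ⟨hφx.1, by rw [hφx.2, hxnorm]⟩
  rw [ContinuousWithinAt]
  apply tendsto_of_subseq_tendsto
  intro ns hns
  have hnsx : Tendsto ns atTop (𝓝 x) := hns.mono_right nhdsWithin_le_nhds
  have hnsD : ∀ᶠ n in atTop, ns n ∈ D :=
    hns.eventually (eventually_mem_nhdsWithin)
  have hball : IsCompact (Metric.closedBall (0 : X →L[ℝ] ℝ) 1) :=
    isCompact_closedBall 0 1
  have hmem : ∃ᶠ n in atTop, φ (ns n) ∈ Metric.closedBall (0 : X →L[ℝ] ℝ) 1 := by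
    apply (hnsD.mono ?_).frequently
    intro n hn
    simp [mem_closedBall_zero_iff, (hφ _ hn).1]
  obtain ⟨f, hfball, ms, hms, hmstendsto⟩ := hball.tendsto_subseq' hmem
  refine ⟨ms, ?_⟩
  -- evaluate: φ (ns (ms n)) (ns (ms n)) → f x
  have heval : Tendsto (fun n => φ (ns (ms n)) (ns (ms n))) atTop (𝓝 (f x)) := by
    have hpair : Tendsto (fun n => (φ (ns (ms n)), ns (ms n))) atTop (𝓝 (f, x)) :=
      hmstendsto.prodMk_nhds (hnsx.comp hms.tendsto_atTop)
    exact (isBoundedBilinearMap_apply.continuous.tendsto (f, x)).comp hpair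
  have hone : ∀ᶠ n in atTop, φ (ns (ms n)) (ns (ms n)) = 1 := by
    apply (hms.tendsto_atTop.eventually hnsD).mono
    intro n hn
    exact (hφ _ hn).2
  have hfx : f x = 1 := by
    have h1 : Tendsto (fun _ : ℕ => (1:ℝ)) atTop (𝓝 (f x)) :=
      heval.congr' hone
    exact tendsto_nhds_unique h1 (tendsto_const_nhds (α := ℕ) (f := atTop))
  have hfnorm : ‖f‖ = 1 := by
    have h1 : ‖f‖ ≤ 1 := by simpa [mem_closedBall_zero_iff] using hfball
    have h2 : (1 : ℝ) ≤ ‖f‖ := by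
      have := f.le_opNorm x
      rw [hxnorm, mul_one] at this
      calc (1 : ℝ) = f x := hfx.symm
        _ ≤ ‖f x‖ := le_abs_self _
        _ ≤ ‖f‖ := this
    linarith
  have hffeq : f = f0 := huniq _ ⟨hfnorm, by rw [hfx, hxnorm]⟩
  rw [hffeq, ← hφxeq] at hmstendsto
  exact hmstendsto
end

section
/- There exists b with 0 < b < 1 such that ∫₀^{2π} cos²(t) · √(sin²(t) + b²·cos²(t)) dt ≠ (1/2) · ∫₀^{2π} √(sin²(t) + b²·cos²(t)) dt. (Consequently, the average of x² over the ellipse {(x,y) : x² + y²/b² = 1} with respect to normalized arclength measure differs from 1/2, so the trace formula tr A = N·∫_{S_X} ⟨Ax, x*⟩ dμ can fail for a two-dimensional norm without a 1-symmetric basis.) -/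
/-!
As `b → 0` the arclength density `√(sin² t + b² cos² t)` tends to `|sin t|`, and for `|sin t|`
the weighted integral `∫ cos² t |sin t| = 4/3` is not half of `∫ |sin t| = 4`. Quantitatively,
`|sin t| ≤ √(sin² t + b² cos² t) ≤ |sin t| + b`, which already separates the two sides at
`b = 1/5`. Both integrands are `π`-periodic, so it suffices to work on `[0, π]`, where `sin ≥ 0`.
-/

open Real intervalIntegral

theorem Function.Periodic.intervalIntegral_zero_two_mul {f : ℝ → ℝ} {T : ℝ}
    (hf : Function.Periodic f T) (hcont : Continuous f) :
    ∫ x in (0 : ℝ)..2 * T, f x = 2 * ∫ x in (0 : ℝ)..T, f x := by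
  rw [two_mul, hf.intervalIntegral_add_eq_add 0 T fun _ _ ↦ hcont.intervalIntegrable _ _,
    zero_add, two_mul]

/-- The speed of the parametrization `t ↦ (cos t, b sin t)` of the ellipse. -/
noncomputable def ellipseSpeed (b t : ℝ) : ℝ :=
  √(sin t ^ 2 + b ^ 2 * cos t ^ 2)

@[fun_prop]
theorem continuous_ellipseSpeed (b : ℝ) : Continuous (ellipseSpeed b) := by
  unfold ellipseSpeed
  fun_prop

theorem ellipseSpeed_periodic (b : ℝ) : Function.Periodic (ellipseSpeed b) π := by
  intro t
  simp only [ellipseSpeed, sin_add_pi, cos_add_pi, neg_sq]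

theorem abs_sin_le_ellipseSpeed (b t : ℝ) : |sin t| ≤ ellipseSpeed b t := by
  rw [ellipseSpeed, ← sqrt_sq_eq_abs]
  gcongr
  exact le_add_of_nonneg_right (by positivity)

theorem ellipseSpeed_le_abs_sin_add {b : ℝ} (hb : 0 ≤ b) (t : ℝ) :
    ellipseSpeed b t ≤ |sin t| + b := by
  rw [ellipseSpeed, sqrt_le_left (by positivity)]
  have hcos : cos t ^ 2 ≤ 1 := cos_sq_le_one t
  nlinarith [sq_abs (sin t), abs_nonneg (sin t), mul_nonneg (sq_nonneg b) (sq_nonneg (cos t))]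

theorem integral_cos_sq_mul_sin_zero_pi : ∫ t in (0 : ℝ)..π, cos t ^ 2 * sin t = 2 / 3 := by
  have h := integral_sin_pow_odd_mul_cos_pow (a := 0) (b := π) 0 2
  simp only [mul_zero, zero_add, pow_one, pow_zero, mul_one, cos_pi, cos_zero] at h
  rw [integral_congr fun t _ ↦ mul_comm (cos t ^ 2) (sin t), h, integral_pow]
  norm_num

theorem two_le_integral_ellipseSpeed (b : ℝ) : 2 ≤ ∫ t in (0 : ℝ)..π, ellipseSpeed b t := by
  calc (2 : ℝ) = ∫ t in (0 : ℝ)..π, sin t := by norm_num [integral_sin]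
    _ ≤ ∫ t in (0 : ℝ)..π, ellipseSpeed b t := by
      refine integral_mono_on pi_pos.le (continuous_sin.intervalIntegrable _ _)
        ((continuous_ellipseSpeed b).intervalIntegrable _ _) fun t _ ↦ ?_
      exact (le_abs_self _).trans (abs_sin_le_ellipseSpeed b t)

theorem integral_cos_sq_mul_ellipseSpeed_le {b : ℝ} (hb : 0 ≤ b) :
    ∫ t in (0 : ℝ)..π, cos t ^ 2 * ellipseSpeed b t ≤ 2 / 3 + b * π / 2 := by
  calc ∫ t in (0 : ℝ)..π, cos t ^ 2 * ellipseSpeed b t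
      ≤ ∫ t in (0 : ℝ)..π, (cos t ^ 2 * sin t + b * cos t ^ 2) := by
        refine integral_mono_on pi_pos.le (Continuous.intervalIntegrable (by fun_prop) _ _)
          (Continuous.intervalIntegrable (by fun_prop) _ _) fun t ht ↦ ?_
        have hsin : |sin t| = sin t := abs_of_nonneg (sin_nonneg_of_nonneg_of_le_pi ht.1 ht.2)
        have := mul_le_mul_of_nonneg_left (ellipseSpeed_le_abs_sin_add hb t) (sq_nonneg (cos t))
        rw [hsin] at this
        linarith
    _ = 2 / 3 + b * π / 2 := by
        rw [integral_add (Continuous.intervalIntegrable (by fun_prop) _ _)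
            (Continuous.intervalIntegrable (by fun_prop) _ _), integral_const_mul,
          integral_cos_sq_mul_sin_zero_pi, integral_cos_sq]
        simp only [sin_pi, sin_zero, mul_zero, sub_zero]
        ring

theorem exists_ellipse_average_ne_half :
    ∃ b : ℝ, 0 < b ∧ b < 1 ∧
      (∫ t in (0 : ℝ)..(2 * π),
          Real.cos t ^ 2 * Real.sqrt (Real.sin t ^ 2 + b ^ 2 * Real.cos t ^ 2)) ≠
        (1 / 2) * ∫ t in (0 : ℝ)..(2 * π),
          Real.sqrt (Real.sin t ^ 2 + b ^ 2 * Real.cos t ^ 2) := by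
  refine ⟨1 / 5, by norm_num, by norm_num, ne_of_lt ?_⟩
  change ∫ t in (0 : ℝ)..2 * π, cos t ^ 2 * ellipseSpeed (1 / 5) t
    < 1 / 2 * ∫ t in (0 : ℝ)..2 * π, ellipseSpeed (1 / 5) t
  have hperiodic : Function.Periodic (fun t ↦ cos t ^ 2 * ellipseSpeed (1 / 5) t) π := fun t ↦ by
    simp only [cos_add_pi, neg_sq, ellipseSpeed_periodic (1 / 5) t]
  rw [hperiodic.intervalIntegral_zero_two_mul (by fun_prop),
    (ellipseSpeed_periodic _).intervalIntegral_zero_two_mul (continuous_ellipseSpeed _)]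
  linarith [integral_cos_sq_mul_ellipseSpeed_le (b := 1 / 5) (by norm_num),
    two_le_integral_ellipseSpeed (1 / 5), pi_lt_d2]
end
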